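/- For (a,b,c) ∈ ℂ³, let A(a,b,c) be the 8×8 complex skew-symmetric matrix (indices 0–7) whose strictly upper-triangular entries are A₀₁ = c, A₀₃ = a, A₀₇ = a, A₁₃ = b, A₁₇ = b, A₂₃ = a, A₂₄ = b, A₃₄ = c, A₅₆ = a, A₅₇ = b, A₆₇ = c, with all other strictly upper-triangular entries equal to 0 and A_{j,i} = −A_{i,j}. Then for every (a,b,c) ≠ (0,0,0) the matrix A(a,b,c) has rank exactly 6. In particular the span of A(1,0,0), A(0,1,0), A(0,0,1) is a 3-dimensional space of skew-symmetric 8×8 matrices of constant rank 6. -/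

import Mathlib

/-!
`A(a,b,c)` has two independent kernel vectors, quadratic in `(a,b,c)`, so its rank is at most 6.
Conversely, for suitable orderings of six rows and six columns the corresponding minor is
triangular with diagonal entries `±a` (resp. `±b`, `±c`), so the rank is at least 6 as soon as
one coordinate is nonzero. The statements about the span follow because `A(a,b,c)` is linear in
`(a,b,c)` and vanishes only at the origin.
-/

open Matrix

/-- The strictly upper-triangular part of the matrix of Statement 18:
`A₀₁ = c, A₀₃ = a, A₀₇ = a, A₁₃ = b, A₁₇ = b, A₂₃ = a, A₂₄ = b, A₃₄ = c,
A₅₆ = a, A₅₇ = b, A₆₇ = c`. -/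
def upperPart (a b c : ℂ) : Matrix (Fin 8) (Fin 8) ℂ :=
  Matrix.of !![0, c, 0, a, 0, 0, 0, a;
               0, 0, 0, b, 0, 0, 0, b;
               0, 0, 0, a, b, 0, 0, 0;
               0, 0, 0, 0, c, 0, 0, 0;
               0, 0, 0, 0, 0, 0, 0, 0;
               0, 0, 0, 0, 0, 0, a, b;
               0, 0, 0, 0, 0, 0, 0, c;
               0, 0, 0, 0, 0, 0, 0, 0]

/-- The skew-symmetric matrix `A(a,b,c)` of Statement 18. -/
def skewA (a b c : ℂ) : Matrix (Fin 8) (Fin 8) ℂ :=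
  upperPart a b c - (upperPart a b c)ᵀ

section RankBounds

variable {K m n : Type*} [Field K]

theorem linearIndependent_pair_of_apply {v w : n → K} {i j : n} (hvi : v i ≠ 0) (hwi : w i = 0)
    (hvj : v j = 0) (hwj : w j ≠ 0) : LinearIndependent K ![v, w] := by
  refine LinearIndependent.pair_iff.2 fun s t hst => ⟨?_, ?_⟩
  · simpa [hwi, hvi] using congrFun hst i
  · simpa [hvj, hwj] using congrFun hst j

variable [Fintype n]

theorem Matrix.card_le_rank_of_lowerTriangular_submatrix {ι : Type*} [Fintype ι]
    [LinearOrder ι] (A : Matrix m n K) (r : ι → m) (c : ι → n)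
    (htri : ∀ i j, i < j → A (r i) (c j) = 0) (hdiag : ∀ i, A (r i) (c i) ≠ 0) :
    Fintype.card ι ≤ A.rank := by
  have hdet : (A.submatrix r c).det ≠ 0 := by
    rw [det_of_isLowerTriangular (A.submatrix r c) fun i j hij => htri i j hij]
    exact Finset.prod_ne_zero_iff.2 fun i _ => hdiag i
  calc Fintype.card ι = (A.submatrix r c).rank := by
        rw [rank_of_isUnit _ ((isUnit_iff_isUnit_det _).2 hdet.isUnit)]
    _ ≤ A.rank := rank_submatrix_le A r c

theorem Matrix.rank_add_card_le_of_linearIndependent {κ : Type*} [Fintype κ]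
    (A : Matrix m n K) (v : κ → n → K) (hv : LinearIndependent K v) (hAv : ∀ k, A *ᵥ v k = 0) :
    A.rank + Fintype.card κ ≤ Fintype.card n := by
  have hker : Fintype.card κ ≤ Module.finrank K (LinearMap.ker A.mulVecLin) := by
    rw [← finrank_span_eq_card hv]
    refine Submodule.finrank_mono (Submodule.span_le.2 ?_)
    rintro _ ⟨k, rfl⟩
    exact hAv k
  have hrank_nullity := LinearMap.finrank_range_add_finrank_ker A.mulVecLin
  rw [Module.finrank_fintype_fun_eq_card] at hrank_nullity
  rw [Matrix.rank]
  omega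

end RankBounds

section SkewA

variable (a b c : ℂ)

/-- `upperPart` wraps `!![…]` in a second `Matrix.of`, which blocks `simp`. -/
lemma upperPart_eq : upperPart a b c =
    !![0, c, 0, a, 0, 0, 0, a;
       0, 0, 0, b, 0, 0, 0, b;
       0, 0, 0, a, b, 0, 0, 0;
       0, 0, 0, 0, c, 0, 0, 0;
       0, 0, 0, 0, 0, 0, 0, 0;
       0, 0, 0, 0, 0, 0, a, b;
       0, 0, 0, 0, 0, 0, 0, c;
       0, 0, 0, 0, 0, 0, 0, 0] := rfl

lemma skewA_eq : skewA a b c =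
    !![ 0,  c,  0,  a,  0,  0,  0,  a;
       -c,  0,  0,  b,  0,  0,  0,  b;
        0,  0,  0,  a,  b,  0,  0,  0;
       -a, -b, -a,  0,  c,  0,  0,  0;
        0,  0, -b, -c,  0,  0,  0,  0;
        0,  0,  0,  0,  0,  0,  a,  b;
        0,  0,  0,  0,  0, -a,  0,  c;
       -a, -b,  0,  0,  0, -b, -c,  0] := by
  ext i j
  fin_cases i <;> fin_cases j <;> simp [skewA, upperPart_eq]

lemma transpose_skewA : (skewA a b c)ᵀ = -skewA a b c := by
  rw [skewA, transpose_sub, transpose_transpose, neg_sub]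

lemma skewA_eq_smul_add_smul_add_smul :
    skewA a b c = a • skewA 1 0 0 + b • skewA 0 1 0 + c • skewA 0 0 1 := by
  ext i j
  fin_cases i <;> fin_cases j <;> simp [skewA_eq]

variable {a b c} in
lemma skewA_eq_zero_iff : skewA a b c = 0 ↔ (a, b, c) = (0, 0, 0) := by
  refine ⟨fun h => ?_, fun h => ?_⟩
  · have h03 := congrFun₂ h 0 3
    have h13 := congrFun₂ h 1 3
    have h01 := congrFun₂ h 0 1
    simp only [skewA_eq] at h03 h13 h01
    simp_all
  · cases h
    simp [skewA_eq_smul_add_smul_add_smul 0 0 0]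

/-- `a • kernelVec 1 = b • kernelVec 2 + c • kernelVec 0`, so only two of these are independent;
which two depends on which of `a, b, c` is nonzero. -/
def kernelVec : Fin 3 → Fin 8 → ℂ :=
  ![![0, 0, -(a * c), a * b, -a ^ 2, -(b * c), b ^ 2, -(a * b)],
    ![b ^ 2, -(a * b), -c ^ 2, b * c, -(a * c), 0, 0, 0],
    ![a * b, -a ^ 2, 0, 0, 0, c ^ 2, -(b * c), a * c]]

lemma skewA_mulVec_kernelVec (k : Fin 3) : skewA a b c *ᵥ kernelVec a b c k = 0 := by
  ext i
  fin_cases k <;> fin_cases i <;>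
    simp [skewA_eq, kernelVec, mulVec, dotProduct, Fin.sum_univ_eight] <;> ring

variable {a b c}

lemma rank_skewA_eq_six (r col : Fin 6 → Fin 8)
    (htri : ∀ i j, i < j → skewA a b c (r i) (col j) = 0)
    (hdiag : ∀ i, skewA a b c (r i) (col i) ≠ 0) (k l : Fin 3)
    (hind : LinearIndependent ℂ ![kernelVec a b c k, kernelVec a b c l]) :
    (skewA a b c).rank = 6 := by
  have hle := (skewA a b c).rank_add_card_le_of_linearIndependent _ hind
    (by simp [Fin.forall_fin_two, skewA_mulVec_kernelVec])
  have hge := (skewA a b c).card_le_rank_of_lowerTriangular_submatrix r col htri hdiag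
  simp only [Fintype.card_fin] at hle hge
  omega

lemma rank_skewA_of_a_ne_zero (ha : a ≠ 0) : (skewA a b c).rank = 6 := by
  refine rank_skewA_eq_six ![2, 0, 5, 6, 7, 3] ![3, 7, 6, 5, 0, 2] ?_ ?_ 2 0
    (linearIndependent_pair_of_apply (i := 1) (j := 4) ?_ ?_ ?_ ?_)
  · intro i j hij
    fin_cases i <;> fin_cases j <;> simp_all [skewA_eq]
  · intro i
    fin_cases i <;> simp [skewA_eq, ha]
  all_goals simp [kernelVec, ha]

lemma rank_skewA_of_b_ne_zero (hb : b ≠ 0) : (skewA a b c).rank = 6 := by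
  refine rank_skewA_eq_six ![5, 1, 4, 2, 3, 7] ![7, 3, 2, 4, 1, 5] ?_ ?_ 1 0
    (linearIndependent_pair_of_apply (i := 0) (j := 6) ?_ ?_ ?_ ?_)
  · intro i j hij
    fin_cases i <;> fin_cases j <;> simp_all [skewA_eq]
  · intro i
    fin_cases i <;> simp [skewA_eq, hb]
  all_goals simp [kernelVec, hb]

lemma rank_skewA_of_c_ne_zero (hc : c ≠ 0) : (skewA a b c).rank = 6 := by
  refine rank_skewA_eq_six ![4, 6, 0, 1, 3, 7] ![3, 7, 1, 0, 4, 6] ?_ ?_ 1 2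
    (linearIndependent_pair_of_apply (i := 2) (j := 5) ?_ ?_ ?_ ?_)
  · intro i j hij
    fin_cases i <;> fin_cases j <;> simp_all [skewA_eq]
  · intro i
    fin_cases i <;> simp [skewA_eq, hc]
  all_goals simp [kernelVec, hc]

lemma rank_skewA (h : (a, b, c) ≠ (0, 0, 0)) : (skewA a b c).rank = 6 := by
  rcases eq_or_ne a 0 with rfl | ha
  · rcases eq_or_ne b 0 with rfl | hb
    · exact rank_skewA_of_c_ne_zero fun hc => h (by rw [hc])
    · exact rank_skewA_of_b_ne_zero hb
  · exact rank_skewA_of_a_ne_zero ha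

lemma mem_span_skewA_iff {A : Matrix (Fin 8) (Fin 8) ℂ} :
    A ∈ Submodule.span ℂ {skewA 1 0 0, skewA 0 1 0, skewA 0 0 1} ↔ ∃ a b c, skewA a b c = A := by
  simp only [Submodule.mem_span_triple, ← skewA_eq_smul_add_smul_add_smul]

lemma linearIndependent_skewA : LinearIndependent ℂ ![skewA 1 0 0, skewA 0 1 0, skewA 0 0 1] := by
  refine Fintype.linearIndependent_iff.2 fun g hg => ?_
  simp only [Fin.sum_univ_three, cons_val, ← skewA_eq_smul_add_smul_add_smul, skewA_eq_zero_iff,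
    Prod.mk.injEq] at hg
  intro i
  fin_cases i <;> simp [hg]

end SkewA

/-- The matrix `A(a,b,c)` has rank exactly 6 for `(a,b,c) ≠ (0,0,0)`;
in particular the span of `A(1,0,0), A(0,1,0), A(0,0,1)` is a 3-dimensional space of
skew-symmetric `8×8` complex matrices of constant rank 6. -/
theorem stmt_18 :
    (∀ a b c : ℂ, (a, b, c) ≠ (0, 0, 0) → (skewA a b c).rank = 6) ∧
    Module.finrank ℂ (Submodule.span ℂ
      ({skewA 1 0 0, skewA 0 1 0, skewA 0 0 1} : Set (Matrix (Fin 8) (Fin 8) ℂ))) = 3 ∧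
    (∀ A ∈ Submodule.span ℂ
      ({skewA 1 0 0, skewA 0 1 0, skewA 0 0 1} : Set (Matrix (Fin 8) (Fin 8) ℂ)),
      Aᵀ = -A) ∧
    (∀ A ∈ Submodule.span ℂ
      ({skewA 1 0 0, skewA 0 1 0, skewA 0 0 1} : Set (Matrix (Fin 8) (Fin 8) ℂ)),
      A ≠ 0 → A.rank = 6) := by
  refine ⟨fun a b c => rank_skewA, ?_, ?_, ?_⟩
  · have := finrank_span_eq_card linearIndependent_skewA
    rwa [range_cons, range_cons_cons_empty, Set.singleton_union, Fintype.card_fin] at this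
  · intro A hA
    obtain ⟨a, b, c, rfl⟩ := mem_span_skewA_iff.1 hA
    exact transpose_skewA a b c
  · intro A hA hA0
    obtain ⟨a, b, c, rfl⟩ := mem_span_skewA_iff.1 hA
    exact rank_skewA (mt skewA_eq_zero_iff.2 hA0)
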